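/- arXiv:0708.1706 — 2 statements merged into one kernel-verified Lean document; each statement's English description precedes it below -/
import Mathlib

section
/- Let p be prime and P(t,x) = ∫_{Q_p} χ(-xξ) e^{-t|ξ|_p^α} dμ(ξ) be the transition density of the p-adic α-stable process with α > 0, t > 0. Then for every m ∈ Z and t > 0, ∫_{|x|_p ≤ p^m} P(t,x) dμ(x) = (1 - p^{-1}) Σ_{i=0}^∞ p^{-i} exp(-p^{-α(m+i)} t). -/
/-!
Swap the two integrals: the kernel has modulus one and `ξ ↦ exp (-t ‖ξ‖ ^ α)` is integrable.
The integral of `x ↦ χ (-x ξ)` over the ball `‖x‖ ≤ p ^ m` is the volume `p ^ m` of the ball when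
`‖ξ‖ ≤ p ^ (-m)`, and vanishes otherwise, because translating by `p ^ (-m)` preserves the ball
and multiplies the integrand by a character value different from `1`. What remains is the
integral of the radial function `exp (-t ‖ξ‖ ^ α)` over `‖ξ‖ ≤ p ^ (-m)`, which splits over the
spheres `‖ξ‖ = p ^ (-m - i)` of volume `p ^ (-m - i) (1 - p⁻¹)`; these volumes come from the
ball of radius `p ^ (n + 1)` being the disjoint union of `p` translates of the ball of radius
`p ^ n`.
-/

open MeasureTheory Metric Set Filter Asymptotics

lemma summable_zpow_mul_exp_neg_mul_rpow {q t α : ℝ} (hq : 1 < q) (ht : 0 < t) (hα : 0 < α) :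
    Summable fun z : ℤ => q ^ z * Real.exp (-t * (q ^ z) ^ α) := by
  have hq0 : 0 < q := one_pos.trans hq
  have hgeom : Summable fun n : ℕ => q⁻¹ ^ n :=
    summable_geometric_of_lt_one (inv_nonneg.2 hq0.le) (inv_lt_one_of_one_lt₀ hq)
  rw [summable_int_iff_summable_nat_and_neg]
  constructor
  · have hu : Tendsto (fun n : ℕ => (q ^ n) ^ α) atTop atTop :=
      (tendsto_rpow_atTop hα).comp (tendsto_pow_atTop_atTop_of_one_lt hq)
    have hdecay := ((isLittleO_exp_neg_mul_rpow_atTop ht (-(2 / α))).comp_tendsto hu).isBigO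
    refine summable_of_isBigO_nat hgeom ((isBigO_refl (fun n : ℕ => q ^ n) atTop).mul hdecay
      |>.congr (fun n => by simp) fun n => ?_)
    rw [Function.comp_apply, ← Real.rpow_mul (by positivity), mul_neg, mul_div_cancel₀ _ hα.ne',
      Real.rpow_neg (by positivity), inv_pow, Real.rpow_two]
    field_simp
  · refine Summable.of_nonneg_of_le (fun n => by positivity) (fun n => ?_) hgeom
    rw [zpow_neg, zpow_natCast, inv_pow]
    exact mul_le_of_le_one_right (by positivity)
      (Real.exp_le_one_iff.2 (mul_nonpos_of_nonpos_of_nonneg (neg_nonpos.2 ht.le) (by positivity)))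

lemma setIntegral_eq_zero_of_map_add_ne_one {G 𝕜 : Type*} [AddGroup G] [MeasurableSpace G]
    [MeasurableAdd G] [RCLike 𝕜] (μ : Measure G) [μ.IsAddRightInvariant] {ψ : G → 𝕜}
    (hψ : ∀ a b, ψ (a + b) = ψ a * ψ b) {s : Set G} (hs : MeasurableSet s) {x₀ : G}
    (hsx : (· + x₀) ⁻¹' s = s) (hx₀ : ψ x₀ ≠ 1) : ∫ x in s, ψ x ∂μ = 0 := by
  have hmem (x : G) : x + x₀ ∈ s ↔ x ∈ s := by
    show x ∈ (· + x₀) ⁻¹' s ↔ _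
    rw [hsx]
  have htrans : ∫ x in s, ψ x ∂μ = ψ x₀ * ∫ x in s, ψ x ∂μ := by
    rw [← integral_indicator hs, ← integral_const_mul]
    conv_lhs => rw [← integral_add_right_eq_self _ x₀]
    congr 1 with x
    by_cases hx : x ∈ s
    · rw [indicator_of_mem ((hmem x).2 hx), indicator_of_mem hx, hψ, mul_comm]
    · rw [indicator_of_notMem (mt (hmem x).1 hx), indicator_of_notMem hx, mul_zero]
  have : (1 - ψ x₀) * ∫ x in s, ψ x ∂μ = 0 := by rw [sub_mul, one_mul, ← htrans, sub_self]
  exact (mul_eq_zero.1 this).resolve_left (sub_ne_zero.2 hx₀.symm)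

namespace Padic

variable {p : ℕ} [hp : Fact p.Prime]

private lemma natCast_pos : (0 : ℝ) < p := by exact_mod_cast hp.out.pos

private lemma one_lt_natCast : (1 : ℝ) < p := by exact_mod_cast hp.out.one_lt

lemma norm_natCast_sub_natCast {j k : ℕ} (hj : j < p) (hk : k < p) (hjk : j ≠ k) :
    ‖(j - k : ℚ_[p])‖ = 1 := by
  have hndvd : ¬ (p : ℤ) ∣ (j : ℤ) - k := fun hdvd =>
    hjk (by have := Int.eq_zero_of_abs_lt_dvd hdvd (by rw [abs_lt]; omega); omega)
  have := Padic.norm_int_le_one (p := p) ((j : ℤ) - k)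
  rw [← Padic.norm_intCast_lt_one_iff] at hndvd
  push_cast at this hndvd
  exact le_antisymm this (not_lt.1 hndvd)

lemma closedBall_zpow_add_one_eq_biUnion (n : ℤ) :
    closedBall (0 : ℚ_[p]) (p ^ (n + 1)) =
      ⋃ j ∈ Finset.range p, closedBall ((j : ℚ_[p]) * p ^ (-(n + 1))) (p ^ n) := by
  have hpn : (p : ℚ_[p]) ^ (n + 1) ≠ 0 := zpow_ne_zero _ (by exact_mod_cast hp.out.ne_zero)
  apply Subset.antisymm
  · intro x hx
    rw [mem_closedBall_zero_iff] at hx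
    have hy : ‖x * p ^ (n + 1)‖ ≤ 1 := by
      rw [norm_mul, norm_p_zpow, zpow_neg, mul_inv_le_iff₀ (zpow_pos natCast_pos _), one_mul]
      exact hx
    obtain ⟨j, hjp, hj⟩ := PadicInt.exists_mem_range (⟨x * p ^ (n + 1), hy⟩ : ℤ_[p])
    rw [IsLocalRing.mem_maximalIdeal, PadicInt.mem_nonunits] at hj
    replace hj : ‖x * p ^ (n + 1) - j‖ < 1 := hj
    refine mem_biUnion (Finset.mem_range.2 hjp) ?_
    rw [mem_closedBall, dist_eq_norm]
    have : x - j * p ^ (-(n + 1)) = (x * p ^ (n + 1) - j) * p ^ (-(n + 1)) := by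
      rw [sub_mul, mul_assoc, zpow_neg, mul_inv_cancel₀ hpn, mul_one]
    have hj' : ‖x * p ^ (n + 1) - j‖ ≤ (p : ℝ) ^ (-1 : ℤ) := by
      simpa using (norm_lt_pow_iff_norm_le_pow_sub_one _ 0).1 (by simpa using hj)
    rw [this, norm_mul, norm_p_zpow, neg_neg]
    calc ‖x * p ^ (n + 1) - j‖ * (p : ℝ) ^ (n + 1) ≤ (p : ℝ) ^ (-1 : ℤ) * p ^ (n + 1) := by
          gcongr
      _ = p ^ n := by rw [← zpow_add₀ natCast_pos.ne']; ring_nf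
  · refine iUnion₂_subset fun j _ => ?_
    have hc : (j : ℚ_[p]) * p ^ (-(n + 1)) ∈ closedBall (0 : ℚ_[p]) (p ^ (n + 1)) := by
      rw [mem_closedBall_zero_iff, norm_mul, norm_p_zpow, neg_neg]
      exact mul_le_of_le_one_left (zpow_pos natCast_pos _).le
        (IsUltrametricDist.norm_natCast_le_one _ _)
    rw [IsUltrametricDist.closedBall_eq_of_mem hc]
    exact closedBall_subset_closedBall (zpow_le_zpow_right₀ one_lt_natCast.le (by omega))

lemma pairwiseDisjoint_closedBall_natCast_mul (n : ℤ) :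
    (Finset.range p : Set ℕ).PairwiseDisjoint
      fun j => closedBall ((j : ℚ_[p]) * p ^ (-(n + 1))) ((p : ℝ) ^ n) := by
  intro j hj k hk hjk
  refine Set.disjoint_left.2 fun x hxj hxk => ?_
  have hdist := IsUltrametricDist.dist_triangle_max ((j : ℚ_[p]) * p ^ (-(n + 1))) x
    ((k : ℚ_[p]) * p ^ (-(n + 1)))
  rw [dist_eq_norm, ← sub_mul, norm_mul, norm_p_zpow, neg_neg,
    norm_natCast_sub_natCast (Finset.mem_range.1 hj) (Finset.mem_range.1 hk) hjk, one_mul] at hdist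
  have := hdist.trans (max_le (dist_comm x _ ▸ hxj) hxk)
  exact absurd this (not_le.2 (zpow_lt_zpow_right₀ one_lt_natCast (lt_add_one n)))

lemma sphere_zpow_eq_diff (z : ℤ) :
    sphere (0 : ℚ_[p]) (p ^ z) = closedBall 0 (p ^ z) \ closedBall 0 (p ^ (z - 1)) := by
  ext x
  simp [← norm_lt_pow_iff_norm_le_pow_sub_one, eq_iff_le_not_lt]

lemma iUnion_sphere_zpow : ⋃ z : ℤ, sphere (0 : ℚ_[p]) (p ^ z) = {0}ᶜ := by
  ext x
  simp only [mem_iUnion, mem_sphere_zero_iff_norm, mem_compl_singleton_iff]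
  refine ⟨fun ⟨z, hz⟩ hx => ?_, fun hx => ⟨_, norm_eq_zpow_neg_valuation hx⟩⟩
  rw [hx, norm_zero] at hz
  exact (zpow_pos natCast_pos z).ne' hz.symm

lemma iUnion_sphere_zpow_sub_natCast (n : ℤ) :
    ⋃ i : ℕ, sphere (0 : ℚ_[p]) (p ^ (n - i)) = closedBall 0 (p ^ n) \ ({0} : Set ℚ_[p]) := by
  rw [sdiff_eq_compl_inter, ← iUnion_sphere_zpow, iUnion_inter]
  ext x
  simp only [mem_iUnion, mem_inter_iff, mem_sphere_zero_iff_norm, mem_closedBall_zero_iff]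
  constructor
  · rintro ⟨i, hi⟩
    exact ⟨n - i, hi, hi ▸ zpow_le_zpow_right₀ one_lt_natCast.le (by omega)⟩
  · rintro ⟨z, hz, hzn⟩
    rw [hz, zpow_le_zpow_iff_right₀ one_lt_natCast] at hzn
    exact ⟨(n - z).toNat, by rw [hz]; congr 1; omega⟩

lemma pairwise_disjoint_sphere_zpow {ι : Type*} {e : ι → ℤ} (he : Function.Injective e) :
    Pairwise fun i j => Disjoint (sphere (0 : ℚ_[p]) (p ^ e i)) (sphere 0 (p ^ e j)) :=
  fun _ _ hij => disjoint_left.2 fun _ hi hj =>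
    hij (he (zpow_right_injective₀ natCast_pos one_lt_natCast.ne'
      ((mem_sphere.1 hi).symm.trans (mem_sphere.1 hj))))

variable [MeasurableSpace ℚ_[p]] [BorelSpace ℚ_[p]] (μ : Measure ℚ_[p])

lemma integrableOn_sphere_comp_norm [IsFiniteMeasureOnCompacts μ] {E : Type*}
    [NormedAddCommGroup E] (f : ℝ → E) (r : ℝ) :
    IntegrableOn (fun ξ => f ‖ξ‖) (sphere (0 : ℚ_[p]) r) μ :=
  (integrableOn_const (C := f r) isBounded_sphere.measure_lt_top.ne).congr_fun
    (fun ξ hξ => by rw [mem_sphere_zero_iff_norm.1 hξ]) isClosed_sphere.measurableSet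

lemma setIntegral_sphere_comp_norm {E : Type*} [NormedAddCommGroup E] [NormedSpace ℝ E]
    [CompleteSpace E] (f : ℝ → E) (r : ℝ) :
    ∫ ξ in sphere (0 : ℚ_[p]) r, f ‖ξ‖ ∂μ = μ.real (sphere 0 r) • f r := by
  rw [setIntegral_congr_fun isClosed_sphere.measurableSet (g := fun _ => f r)
    fun ξ hξ => by rw [mem_sphere_zero_iff_norm.1 hξ], setIntegral_const]

lemma setIntegral_closedBall_zpow_comp_norm [NullSingletonClass μ] {E : Type*}
    [NormedAddCommGroup E] [NormedSpace ℝ E] [CompleteSpace E]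
    (f : ℝ → E) (n : ℤ)
    (hf : IntegrableOn (fun ξ => f ‖ξ‖) (closedBall (0 : ℚ_[p]) (p ^ n)) μ) :
    ∫ ξ in closedBall (0 : ℚ_[p]) (p ^ n), f ‖ξ‖ ∂μ =
      ∑' i : ℕ, μ.real (sphere 0 (p ^ (n - i))) • f (p ^ (n - i)) := by
  have hnull : (closedBall (0 : ℚ_[p]) (p ^ n) \ {0} : Set ℚ_[p]) =ᵐ[μ] closedBall 0 (p ^ n) :=
    sdiff_ae_eq_self.2 (measure_mono_null inter_subset_right (measure_singleton 0))
  rw [← setIntegral_congr_set hnull, ← iUnion_sphere_zpow_sub_natCast (p := p) n,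
    integral_iUnion (fun _ => isClosed_sphere.measurableSet)
      (pairwise_disjoint_sphere_zpow (p := p) fun i j h => by simpa using h)
      (hf.mono_set (iUnion_sphere_zpow_sub_natCast (p := p) n ▸ sdiff_subset))]
  exact tsum_congr fun i => setIntegral_sphere_comp_norm μ f _

variable [μ.IsAddHaarMeasure]

lemma addHaar_closedBall_zpow_add_one (n : ℤ) :
    μ (closedBall (0 : ℚ_[p]) (p ^ (n + 1))) = p * μ (closedBall 0 (p ^ n)) := by
  rw [closedBall_zpow_add_one_eq_biUnion, measure_biUnion_finset
    (pairwiseDisjoint_closedBall_natCast_mul n) fun _ _ => measurableSet_closedBall]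
  simp [Measure.addHaar_closedBall_center]

lemma addHaar_real_closedBall_zpow (n : ℤ) :
    μ.real (closedBall (0 : ℚ_[p]) (p ^ n)) = p ^ n * μ.real (closedBall 0 1) := by
  have hstep (k : ℤ) : μ.real (closedBall (0 : ℚ_[p]) (p ^ (k + 1))) =
      p * μ.real (closedBall 0 (p ^ k)) := by
    simp [measureReal_def, addHaar_closedBall_zpow_add_one]
  induction n using Int.induction_on with
  | zero => simp
  | succ k ih => rw [hstep, ih, zpow_add_one₀ natCast_pos.ne']; ring
  | pred k ih =>
    have h := hstep (-k - 1)
    rw [sub_add_cancel, ih] at h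
    calc _ = (p : ℝ)⁻¹ * (p * μ.real (closedBall 0 (p ^ (-(k : ℤ) - 1)))) := by
          rw [← mul_assoc, inv_mul_cancel₀ natCast_pos.ne', one_mul]
      _ = _ := by rw [← h, zpow_sub_one₀ natCast_pos.ne']; ring

lemma addHaar_real_sphere_zpow (z : ℤ) :
    μ.real (sphere (0 : ℚ_[p]) (p ^ z)) = p ^ z * (1 - (p : ℝ)⁻¹) * μ.real (closedBall 0 1) := by
  rw [sphere_zpow_eq_diff, measureReal_sdiff
    (closedBall_subset_closedBall (zpow_le_zpow_right₀ one_lt_natCast.le (by omega)))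
    measurableSet_closedBall measure_closedBall_lt_top.ne,
    addHaar_real_closedBall_zpow, addHaar_real_closedBall_zpow, zpow_sub_one₀ natCast_pos.ne']
  ring

lemma integrable_comp_norm_of_summable {E : Type*} [NormedAddCommGroup E] (f : ℝ → E)
    (hf : Summable fun z : ℤ => (p : ℝ) ^ z * ‖f (p ^ z)‖) :
    Integrable (fun ξ : ℚ_[p] => f ‖ξ‖) μ := by
  rw [← restrict_compl_singleton (μ := μ) 0, ← IntegrableOn, ← iUnion_sphere_zpow]
  refine integrableOn_iUnion_of_summable_integral_norm
    (fun z => integrableOn_sphere_comp_norm μ f _) ?_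
  simp_rw [setIntegral_sphere_comp_norm μ (fun r => ‖f r‖), addHaar_real_sphere_zpow, smul_eq_mul]
  exact (hf.mul_left ((1 - (p : ℝ)⁻¹) * μ.real (closedBall 0 1))).congr fun _ => by ring

lemma setIntegral_closedBall_zpow_char {χ : ℚ_[p] → ℂ} (hχadd : ∀ a b, χ (a + b) = χ a * χ b)
    (hχtriv : ∀ a : ℚ_[p], ‖a‖ ≤ 1 → χ a = 1) (hχnontriv : ∀ a : ℚ_[p], 1 < ‖a‖ → χ a ≠ 1)
    (m : ℤ) (ξ : ℚ_[p]) :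
    ∫ x in closedBall (0 : ℚ_[p]) (p ^ m), χ (-(x * ξ)) ∂μ =
      if ‖ξ‖ ≤ (p : ℝ) ^ (-m) then ((p ^ m * μ.real (closedBall 0 1) : ℝ) : ℂ) else 0 := by
  have hpm : (p : ℝ) ^ m * p ^ (-m) = 1 := by
    rw [← zpow_add₀ natCast_pos.ne', add_neg_cancel, zpow_zero]
  split_ifs with hξ
  · rw [setIntegral_congr_fun measurableSet_closedBall (g := fun _ => (1 : ℂ))
        fun x hx => hχtriv _ ?_, setIntegral_const, addHaar_real_closedBall_zpow,
      Complex.real_smul, mul_one]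
    rw [norm_neg, norm_mul, ← hpm]
    exact mul_le_mul (mem_closedBall_zero_iff.1 hx) hξ (norm_nonneg _) (zpow_pos natCast_pos _).le
  · have hx₀ : ‖(p : ℚ_[p]) ^ (-m)‖ = (p : ℝ) ^ m := by rw [norm_p_zpow, neg_neg]
    let H := (IsUltrametricDist.closedBall_openAddSubgroup ℚ_[p]
      (zpow_pos (natCast_pos (p := p)) m)).toAddSubgroup
    refine setIntegral_eq_zero_of_map_add_ne_one μ (ψ := fun x => χ (-(x * ξ)))
      (fun a b => by rw [add_mul, neg_add, hχadd]) measurableSet_closedBall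
      (x₀ := (p : ℚ_[p]) ^ (-m)) ?_ (hχnontriv _ ?_)
    · ext x
      exact H.add_mem_cancel_right (show _ ∈ closedBall (0 : ℚ_[p]) _ from
        mem_closedBall_zero_iff.2 hx₀.le)
    · rw [norm_neg, norm_mul, hx₀, ← hpm]
      exact mul_lt_mul_of_pos_left (not_le.1 hξ) (zpow_pos natCast_pos _)

lemma integrable_exp_neg_mul_norm_rpow {t α : ℝ} (ht : 0 < t) (hα : 0 < α) :
    Integrable (fun ξ : ℚ_[p] => Real.exp (-t * ‖ξ‖ ^ α)) μ :=
  integrable_comp_norm_of_summable μ (fun r => Real.exp (-t * r ^ α))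
    ((summable_zpow_mul_exp_neg_mul_rpow one_lt_natCast ht hα).congr fun _ => by
      rw [Real.norm_eq_abs, Real.abs_exp])

lemma setIntegral_closedBall_integral_char_mul {χ : ℚ_[p] → ℂ} (hχmeas : Measurable χ)
    (hχnorm : ∀ a, ‖χ a‖ ≤ 1) (hχadd : ∀ a b, χ (a + b) = χ a * χ b)
    (hχtriv : ∀ a : ℚ_[p], ‖a‖ ≤ 1 → χ a = 1) (hχnontriv : ∀ a : ℚ_[p], 1 < ‖a‖ → χ a ≠ 1)
    {g : ℚ_[p] → ℂ} (hg : Integrable g μ) (m : ℤ) :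
    ∫ x in closedBall (0 : ℚ_[p]) (p ^ m), ∫ ξ, χ (-(x * ξ)) * g ξ ∂μ ∂μ =
      ((p ^ m * μ.real (closedBall 0 1) : ℝ) : ℂ) * ∫ ξ in closedBall 0 (p ^ (-m)), g ξ ∂μ := by
  have : IsFiniteMeasure (μ.restrict (closedBall 0 (p ^ m))) :=
    isFiniteMeasure_restrict.2 measure_closedBall_lt_top.ne
  have hprod : Integrable (fun z : ℚ_[p] × ℚ_[p] => χ (-(z.1 * z.2)) * g z.2)
      ((μ.restrict (closedBall 0 (p ^ m))).prod μ) :=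
    (hg.comp_snd _).bdd_mul (c := 1)
      (hχmeas.comp (measurable_fst.mul measurable_snd).neg).aestronglyMeasurable
      (.of_forall fun _ => hχnorm _)
  rw [integral_integral_swap hprod, ← integral_const_mul,
    ← integral_indicator measurableSet_closedBall]
  congr 1 with ξ
  rw [integral_mul_const, setIntegral_closedBall_zpow_char μ hχadd hχtriv hχnontriv]
  split_ifs with hξ
  · rw [indicator_of_mem (mem_closedBall_zero_iff.2 hξ)]
  · rw [indicator_of_notMem (mt mem_closedBall_zero_iff.1 hξ), zero_mul]

end Padic

/-- for the p-adic α-stable transition density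
`P(t,x) = ∫ χ(-xξ) e^{-t|ξ|_p^α} dμ(ξ)`, one has
`∫_{|x|_p ≤ p^m} P(t,x) dμ(x) = (1-p⁻¹) Σ_{i=0}^∞ p^{-i} exp(-p^{-α(m+i)} t)`. -/
theorem stmt7 (p : ℕ) [Fact p.Prime] [MeasurableSpace ℚ_[p]] [BorelSpace ℚ_[p]]
    (μ : Measure ℚ_[p]) [μ.IsAddHaarMeasure]
    (hμ : μ {x : ℚ_[p] | ‖x‖ ≤ 1} = 1)
    (χ : ℚ_[p] → ℂ) (hχmeas : Measurable χ)
    (hχnorm : ∀ a, ‖χ a‖ = 1)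
    (hχadd : ∀ a b, χ (a + b) = χ a * χ b)
    (hχtriv : ∀ a : ℚ_[p], ‖a‖ ≤ 1 → χ a = 1)
    (hχnontriv : ∀ a : ℚ_[p], 1 < ‖a‖ → χ a ≠ 1)
    (α t : ℝ) (hα : 0 < α) (ht : 0 < t) (m : ℤ) :
    ∫ x in {x : ℚ_[p] | ‖x‖ ≤ (p : ℝ) ^ m},
        (∫ ξ : ℚ_[p], χ (-(x * ξ)) * (Real.exp (-t * ‖ξ‖ ^ α) : ℂ) ∂μ) ∂μ =
      (((1 - (p : ℝ)⁻¹) *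
        ∑' i : ℕ, (p : ℝ) ^ (-(i : ℤ)) *
          Real.exp (-(p : ℝ) ^ (-α * ((m : ℝ) + (i : ℝ))) * t) : ℝ) : ℂ) := by
  have hball (r : ℝ) : {x : ℚ_[p] | ‖x‖ ≤ r} = closedBall 0 r := by ext; simp
  have hμB : μ.real (closedBall (0 : ℚ_[p]) 1) = 1 := by rw [measureReal_def, ← hball, hμ]; rfl
  have he := Padic.integrable_exp_neg_mul_norm_rpow μ ht hα
  rw [hball, Padic.setIntegral_closedBall_integral_char_mul μ hχmeas (fun a => (hχnorm a).le)
      hχadd hχtriv hχnontriv (g := fun ξ => (Real.exp (-t * ‖ξ‖ ^ α) : ℂ)) he.ofReal m,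
    integral_complex_ofReal, ← Complex.ofReal_mul,
    Padic.setIntegral_closedBall_zpow_comp_norm μ (fun r => Real.exp (-t * r ^ α)) (-m)
      he.integrableOn]
  simp_rw [Padic.addHaar_real_sphere_zpow, hμB, mul_one, smul_eq_mul]
  rw [← tsum_mul_left, ← tsum_mul_left]
  refine congrArg _ (tsum_congr fun i => ?_)
  have hexp : -t * ((p : ℝ) ^ (-m - i)) ^ α = -(p : ℝ) ^ (-α * ((m : ℝ) + (i : ℝ))) * t := by
    rw [← Real.rpow_intCast, ← Real.rpow_mul (Nat.cast_nonneg p)]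
    push_cast
    ring_nf
  have hpow : (p : ℝ) ^ m * p ^ (-m - i) = p ^ (-(i : ℤ)) := by
    rw [← zpow_add₀ Padic.natCast_pos.ne']
    ring_nf
  rw [hexp, ← hpow]
  ring
end

section
/- Let p be prime, α ≥ 1, λ > α(1+α), and let b : Q_p → Q_p be Borel measurable with ∫_{Z_p} |b(x+y)|_p^{-λ} dμ(y) < ∞ for a fixed x ∈ Q_p. Then for every T > 0, ∫_0^T ∫_{Z_p} |b(x+y)|_p^{-α} P(t,y) dμ(y) dt < ∞, where P(t,y) is the p-adic α-stable transition density. -/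
/-!
Write `‖y‖ = p ^ (-r)`. The integral of `ξ ↦ χ (-(y ξ))` over a ball of radius `≥ p ^ (r + 1)`,
or over a sphere of radius `≥ p ^ (r + 2)`, vanishes: such a set is invariant under a translation
`z` with `χ (-(y z)) ≠ 1`. So in `P(t, y)` only the ball `‖ξ‖ ≤ p ^ (r + 1)` contributes, and
there only the oscillation of `exp (-t ‖ξ‖ ^ α)`, whence `P(t, y) ≤ t p ^ ((r + 1) (1 + α))`;
integrated over `t ≤ ‖y‖ ^ α` this is `O(1)` because `α ≥ 1`. For larger `t` the trivial bound
`P(t, y) ≤ ∫ exp (-t ‖ξ‖ ^ α) = O(1 + t ^ (-(1 + ε)))` integrates to `O(‖y‖ ^ (-α ε))`.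
Hence `∫₀ᵀ P(t, y) dt = O(‖y‖ ^ (-δ))` for every `δ > 0`, and Hölder's inequality with the
exponents `λ / α` and its conjugate `q` reduces the theorem to the hypothesis on `b` and to
`∫_{ℤ_p} ‖y‖ ^ (-δ q) < ∞` for `δ q < 1`.
-/

open MeasureTheory Metric Set
open scoped ENNReal NNReal

lemma exp_neg_le_rpow_neg {s x : ℝ} (hs : 0 < s) (hx : 0 < x) :
    Real.exp (-x) ≤ s ^ s * x ^ (-s) := by
  have hxs : (x / s) ^ s ≤ Real.exp x := by
    calc (x / s) ^ s ≤ Real.exp (x / s) ^ s := by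
          gcongr
          linarith [Real.add_one_le_exp (x / s)]
      _ = Real.exp x := by rw [← Real.exp_mul, div_mul_cancel₀ _ hs.ne']
  calc Real.exp (-x) = (Real.exp x)⁻¹ := Real.exp_neg x
    _ ≤ ((x / s) ^ s)⁻¹ := inv_anti₀ (by positivity) hxs
    _ = s ^ s * x ^ (-s) := by
        rw [Real.div_rpow hx.le hs.le, Real.rpow_neg hx.le]
        field_simp

lemma abs_exp_neg_mul_rpow_sub_le {t α u R : ℝ} (ht : 0 ≤ t) (hα : 0 ≤ α) (hu : 0 ≤ u)
    (huR : u ≤ R) : |Real.exp (-t * u ^ α) - Real.exp (-t * R ^ α)| ≤ t * R ^ α := by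
  have huR' : u ^ α ≤ R ^ α := Real.rpow_le_rpow hu huR hα
  have hu' : 0 ≤ u ^ α := Real.rpow_nonneg hu α
  have hle : Real.exp (-t * R ^ α) ≤ Real.exp (-t * u ^ α) := Real.exp_le_exp.2 (by nlinarith)
  have hone : Real.exp (-t * u ^ α) ≤ 1 := Real.exp_le_one_iff.2 (by nlinarith)
  have hR := Real.one_sub_le_exp_neg (t * R ^ α)
  rw [← neg_mul] at hR
  rw [abs_of_nonneg (sub_nonneg.2 hle)]
  linarith

lemma setIntegral_eq_zero_of_add_mem_iff {G : Type*} [AddGroup G] [MeasurableSpace G]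
    [MeasurableAdd G] {μ : Measure G} [μ.IsAddLeftInvariant] {ψ : G → ℂ}
    (hψ : ∀ a b, ψ (a + b) = ψ a * ψ b) {s : Set G} (hs : MeasurableSet s) {z : G}
    (hz : ∀ ξ, z + ξ ∈ s ↔ ξ ∈ s) (hψz : ψ z ≠ 1) : ∫ ξ in s, ψ ξ ∂μ = 0 := by
  have htranslate : ∫ ξ in s, ψ ξ ∂μ = ψ z * ∫ ξ in s, ψ ξ ∂μ := by
    calc ∫ ξ in s, ψ ξ ∂μ = ∫ ξ, s.indicator ψ (z + ξ) ∂μ := by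
          rw [integral_add_left_eq_self, integral_indicator hs]
      _ = ∫ ξ, ψ z * s.indicator ψ ξ ∂μ := by
          congr 1 with ξ
          by_cases hξ : ξ ∈ s
          · rw [indicator_of_mem ((hz ξ).2 hξ), indicator_of_mem hξ, hψ]
          · rw [indicator_of_notMem (mt (hz ξ).1 hξ), indicator_of_notMem hξ, mul_zero]
      _ = ψ z * ∫ ξ in s, ψ ξ ∂μ := by rw [integral_const_mul, integral_indicator hs]
  have : (1 - ψ z) * ∫ ξ in s, ψ ξ ∂μ = 0 := by linear_combination htranslate
  exact (mul_eq_zero.1 this).resolve_left (sub_ne_zero.2 hψz.symm)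

lemma enorm_mul_exp_of_norm_eq_one {z : ℂ} (hz : ‖z‖ = 1) (u : ℝ) :
    ‖z * (Real.exp u : ℂ)‖ₑ = ENNReal.ofReal (Real.exp u) := by
  rw [← ofReal_norm, norm_mul, hz, one_mul, Complex.norm_real,
    Real.norm_of_nonneg (Real.exp_pos u).le]

lemma lintegral_mul_lt_top_of_holderConjugate {X : Type*} [MeasurableSpace X] {μ : Measure X}
    {p q : ℝ} (hpq : p.HolderConjugate q) {f g : X → ℝ≥0∞} (hf : AEMeasurable f μ)
    (hg : AEMeasurable g μ) (hfp : ∫⁻ a, f a ^ p ∂μ < ⊤) (hgq : ∫⁻ a, g a ^ q ∂μ < ⊤) :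
    ∫⁻ a, f a * g a ∂μ < ⊤ :=
  (ENNReal.lintegral_mul_le_Lp_mul_Lq μ hpq hf hg).trans_lt <| ENNReal.mul_lt_top
    (ENNReal.rpow_lt_top_of_nonneg (one_div_pos.2 hpq.pos).le hfp.ne)
    (ENNReal.rpow_lt_top_of_nonneg (one_div_pos.2 hpq.symm.pos).le hgq.ne)

lemma lintegral_lintegral_mul_swap {X Y : Type*} [MeasurableSpace X] [MeasurableSpace Y]
    {μ : Measure X} {ν : Measure Y} [SFinite μ] [SFinite ν] {f : Y → ℝ≥0∞} {g : X → Y → ℝ≥0∞}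
    (hf : Measurable f) (hg : Measurable (Function.uncurry g)) :
    ∫⁻ x, ∫⁻ y, f y * g x y ∂ν ∂μ = ∫⁻ y, f y * ∫⁻ x, g x y ∂μ ∂ν := by
  rw [lintegral_lintegral_swap ((hf.comp measurable_snd).mul hg).aemeasurable]
  exact lintegral_congr fun y ↦ lintegral_const_mul _ (hg.comp measurable_prodMk_right)

lemma lintegral_Ioi_ofReal_rpow_neg {τ ε : ℝ} (hτ : 0 < τ) (hε : 0 < ε) :
    ∫⁻ t in Ioi τ, ENNReal.ofReal (t ^ (-(1 + ε))) = ENNReal.ofReal (τ ^ (-ε) / ε) := by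
  rw [← ofReal_integral_eq_lintegral_ofReal (integrableOn_Ioi_rpow_of_lt (by linarith) hτ)
    ((ae_restrict_iff' measurableSet_Ioi).2 (ae_of_all _ fun t ht ↦
      Real.rpow_nonneg (hτ.trans ht).le _)), integral_Ioi_rpow_of_lt (by linarith) hτ]
  congr 1
  rw [show -(1 + ε) + 1 = -ε by ring, neg_div_neg_eq]

namespace PadicStable

variable {p : ℕ} [hp : Fact p.Prime]

lemma one_lt_natCast_prime : (1 : ℝ) < p := Nat.one_lt_cast.2 hp.out.one_lt

lemma natCast_prime_pos : (0 : ℝ) < p := zero_lt_one.trans one_lt_natCast_prime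

lemma zpow_natCast_prime_pos (k : ℤ) : (0 : ℝ) < (p : ℝ) ^ k := zpow_pos natCast_prime_pos k

lemma exists_norm_eq_zpow {ξ : ℚ_[p]} (hξ : ξ ≠ 0) : ∃ k : ℤ, ‖ξ‖ = (p : ℝ) ^ k :=
  ⟨_, Padic.norm_eq_zpow_neg_valuation hξ⟩

lemma one_lt_norm_mul_zpow {y : ℚ_[p]} {r b : ℤ} (hy : ‖y‖ = (p : ℝ) ^ (-r)) (hb : r < b) :
    1 < ‖y‖ * (p : ℝ) ^ b := by
  rw [hy, ← zpow_add₀ natCast_prime_pos.ne']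
  exact one_lt_zpow₀ one_lt_natCast_prime (by omega)

lemma compl_closedBall_eq_iUnion_sphere (r : ℤ) :
    (closedBall (0 : ℚ_[p]) ((p : ℝ) ^ r))ᶜ = ⋃ k : ℕ, sphere 0 ((p : ℝ) ^ (r + k + 1)) := by
  ext ξ
  simp only [mem_compl_iff, mem_closedBall_zero_iff, mem_iUnion, mem_sphere_zero_iff_norm, not_le]
  constructor
  · intro h
    have hξ : ξ ≠ 0 := by
      rintro rfl
      exact (norm_zero (E := ℚ_[p]) ▸ h).not_ge (zpow_natCast_prime_pos r).le
    obtain ⟨m, hm⟩ := exists_norm_eq_zpow hξ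
    rw [hm, zpow_lt_zpow_iff_right₀ one_lt_natCast_prime] at h
    exact ⟨(m - r - 1).toNat, by rw [hm]; congr 1; omega⟩
  · rintro ⟨k, hk⟩
    rw [hk, zpow_lt_zpow_iff_right₀ one_lt_natCast_prime]
    omega

lemma closedBall_diff_zero_eq_iUnion_sphere (r : ℤ) :
    closedBall (0 : ℚ_[p]) ((p : ℝ) ^ r) \ {0} = ⋃ k : ℕ, sphere 0 ((p : ℝ) ^ (r - k)) := by
  ext ξ
  simp only [mem_sdiff, mem_closedBall_zero_iff, mem_singleton_iff, mem_iUnion,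
    mem_sphere_zero_iff_norm]
  constructor
  · rintro ⟨h, hξ⟩
    obtain ⟨m, hm⟩ := exists_norm_eq_zpow hξ
    rw [hm, zpow_le_zpow_iff_right₀ one_lt_natCast_prime] at h
    exact ⟨(r - m).toNat, by rw [hm]; congr 1; omega⟩
  · rintro ⟨k, hk⟩
    refine ⟨by rw [hk, zpow_le_zpow_iff_right₀ one_lt_natCast_prime]; omega, ?_⟩
    rintro rfl
    exact (zpow_natCast_prime_pos _).ne (hk ▸ norm_zero).symm

lemma pairwise_disjoint_sphere_zpow :
    Pairwise (Function.onFun Disjoint fun k : ℤ ↦ sphere (0 : ℚ_[p]) ((p : ℝ) ^ k)) := by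
  intro m n hmn
  refine Set.disjoint_left.2 fun ξ hm hn ↦ hmn ?_
  rw [mem_sphere_zero_iff_norm] at hm hn
  exact zpow_right_injective₀ natCast_prime_pos one_lt_natCast_prime.ne' (hm.symm.trans hn)

lemma sphere_zpow_eq_closedBall_sdiff (b : ℤ) :
    sphere (0 : ℚ_[p]) ((p : ℝ) ^ (b + 1)) =
      closedBall 0 ((p : ℝ) ^ (b + 1)) \ closedBall 0 ((p : ℝ) ^ b) := by
  ext ξ
  rw [mem_sphere_zero_iff_norm, mem_sdiff, mem_closedBall_zero_iff, mem_closedBall_zero_iff,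
    Padic.norm_le_pow_iff_norm_lt_pow_add_one ξ b, not_lt]
  exact ⟨fun h ↦ ⟨h.le, h.ge⟩, fun h ↦ le_antisymm h.1 h.2⟩

lemma add_mem_closedBall_zpow_iff {b : ℤ} {z : ℚ_[p]} (hz : ‖z‖ ≤ (p : ℝ) ^ b) (ξ : ℚ_[p]) :
    z + ξ ∈ closedBall 0 ((p : ℝ) ^ b) ↔ ξ ∈ closedBall 0 ((p : ℝ) ^ b) :=
  (IsUltrametricDist.closedBall_openAddSubgroup ℚ_[p]
    (zpow_natCast_prime_pos b)).add_mem_cancel_left (mem_closedBall_zero_iff.2 hz)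

lemma add_mem_sphere_zpow_iff {b : ℤ} {z : ℚ_[p]} (hz : ‖z‖ ≤ (p : ℝ) ^ b) (ξ : ℚ_[p]) :
    z + ξ ∈ sphere 0 ((p : ℝ) ^ (b + 1)) ↔ ξ ∈ sphere 0 ((p : ℝ) ^ (b + 1)) := by
  have hz' : ‖z‖ ≤ (p : ℝ) ^ (b + 1) :=
    hz.trans (zpow_le_zpow_right₀ one_lt_natCast_prime.le (by omega))
  simp only [sphere_zpow_eq_closedBall_sdiff, mem_sdiff, add_mem_closedBall_zpow_iff hz,
    add_mem_closedBall_zpow_iff hz']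

lemma closedBall_zpow_natCast_subset_iUnion (n : ℕ) :
    closedBall (0 : ℚ_[p]) ((p : ℝ) ^ (n : ℤ)) ⊆
      ⋃ j ∈ Finset.range (p ^ n), closedBall ((j : ℚ_[p]) / (p : ℚ_[p]) ^ n) 1 := by
  intro ξ hξ
  rw [mem_closedBall_zero_iff] at hξ
  have hpn : ‖(p : ℚ_[p]) ^ n‖ = ((p : ℝ) ^ (n : ℤ))⁻¹ := by simp
  have hpn0 : (p : ℚ_[p]) ^ n ≠ 0 := pow_ne_zero _ (Nat.cast_ne_zero.2 hp.out.ne_zero)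
  have hz : ‖(p : ℚ_[p]) ^ n * ξ‖ ≤ 1 := by
    rw [norm_mul, hpn]
    exact inv_mul_le_one_of_le₀ hξ (zpow_natCast_prime_pos _).le
  set z : ℤ_[p] := ⟨_, hz⟩
  have happr : ‖z - z.appr n‖ ≤ (p : ℝ) ^ (-(n : ℤ)) :=
    (PadicInt.norm_le_pow_iff_mem_span_pow _ n).2 (z.appr_spec n)
  simp only [mem_iUnion, Finset.mem_range, mem_closedBall, dist_eq_norm]
  refine ⟨z.appr n, z.appr_lt n, ?_⟩
  have hsub : ξ - (z.appr n : ℚ_[p]) / (p : ℚ_[p]) ^ n =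
      ((z - z.appr n : ℤ_[p]) : ℚ_[p]) / (p : ℚ_[p]) ^ n := by
    have hzξ : (z : ℚ_[p]) = (p : ℚ_[p]) ^ n * ξ := rfl
    push_cast
    field_simp
    rw [hzξ, mul_comm]
  rw [hsub, norm_div, PadicInt.padic_norm_e_of_padicInt, hpn, div_inv_eq_mul]
  rw [zpow_neg] at happr
  calc ‖z - z.appr n‖ * (p : ℝ) ^ (n : ℤ)
      ≤ ((p : ℝ) ^ (n : ℤ))⁻¹ * (p : ℝ) ^ (n : ℤ) := by gcongr
    _ = 1 := inv_mul_cancel₀ (zpow_natCast_prime_pos _).ne'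

lemma pairwiseDisjoint_closedBall_natCast (m : ℕ) :
    (↑(Finset.range (p ^ m)) : Set ℕ).PairwiseDisjoint
      fun j ↦ closedBall (j : ℚ_[p]) ((p : ℝ) ^ (-(m : ℤ))) := by
  intro i hi j hj hij
  refine Set.disjoint_left.2 fun ξ hξi hξj ↦ hij ?_
  have hdist : ‖(((i : ℤ) - j : ℤ) : ℚ_[p])‖ ≤ (p : ℝ) ^ (-(m : ℤ)) := by
    have := IsUltrametricDist.dist_triangle_max (i : ℚ_[p]) ξ j
    rw [mem_closedBall] at hξi hξj
    push_cast
    rw [← dist_eq_norm]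
    exact this.trans (max_le (dist_comm ξ (i : ℚ_[p]) ▸ hξi) hξj)
  have hlt : |(i : ℤ) - j| < (p : ℤ) ^ m := by
    simp only [Finset.coe_range, mem_Iio] at hi hj
    have hi' : (i : ℤ) < (p : ℤ) ^ m := by exact_mod_cast hi
    have hj' : (j : ℤ) < (p : ℤ) ^ m := by exact_mod_cast hj
    rw [abs_sub_lt_iff]
    constructor <;> omega
  exact_mod_cast sub_eq_zero.1
    (Int.eq_zero_of_abs_lt_dvd ((Padic.norm_int_le_pow_iff_dvd _ m).1 hdist) hlt)

lemma iUnion_closedBall_natCast_subset (m : ℕ) :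
    ⋃ j ∈ Finset.range (p ^ m), closedBall (j : ℚ_[p]) ((p : ℝ) ^ (-(m : ℤ))) ⊆
      closedBall 0 1 := by
  simp only [iUnion_subset_iff]
  intro j _ ξ hξ
  rw [mem_closedBall, dist_eq_norm] at hξ
  rw [mem_closedBall_zero_iff]
  calc ‖ξ‖ = ‖(ξ - j) + j‖ := by rw [sub_add_cancel]
    _ ≤ max ‖ξ - j‖ ‖(j : ℚ_[p])‖ := IsUltrametricDist.norm_add_le_max _ _
    _ ≤ 1 := max_le (hξ.trans (zpow_le_one_of_nonpos₀ one_lt_natCast_prime.le (by omega)))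
        (by exact_mod_cast Padic.norm_int_le_one (j : ℤ))

section

variable [MeasurableSpace ℚ_[p]] {μ : Measure ℚ_[p]} {χ : ℚ_[p] → ℂ} {α : ℝ}

/-- The `p`-adic `α`-stable transition density `P(t, y)`. -/
noncomputable def transitionDensity (μ : Measure ℚ_[p]) (χ : ℚ_[p] → ℂ) (α t : ℝ) (y : ℚ_[p]) : ℂ :=
  ∫ ξ, χ (-(y * ξ)) * (Real.exp (-t * ‖ξ‖ ^ α) : ℂ) ∂μ

lemma ofReal_re_transitionDensity_le (hχnorm : ∀ a, ‖χ a‖ = 1) (t : ℝ) (y : ℚ_[p]) :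
    ENNReal.ofReal (transitionDensity μ χ α t y).re ≤
      ∫⁻ ξ, ENNReal.ofReal (Real.exp (-t * ‖ξ‖ ^ α)) ∂μ :=
  calc ENNReal.ofReal (transitionDensity μ χ α t y).re
      ≤ ‖transitionDensity μ χ α t y‖ₑ := by
        rw [← ofReal_norm]
        exact ENNReal.ofReal_le_ofReal (Complex.re_le_norm _)
    _ ≤ ∫⁻ ξ, ‖χ (-(y * ξ)) * (Real.exp (-t * ‖ξ‖ ^ α) : ℂ)‖ₑ ∂μ :=
        enorm_integral_le_lintegral_enorm _
    _ = ∫⁻ ξ, ENNReal.ofReal (Real.exp (-t * ‖ξ‖ ^ α)) ∂μ := by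
        simp only [enorm_mul_exp_of_norm_eq_one, hχnorm]

lemma lintegral_Ioc_ofReal_re_transitionDensity_le_of_lintegral_exp_le
    (hχnorm : ∀ a, ‖χ a‖ = 1) {τ ε : ℝ} (hτ : 0 < τ) (hε : 0 < ε) {D : ℝ≥0∞}
    (hexp : ∀ t : ℝ, 0 < t →
      ∫⁻ ξ, ENNReal.ofReal (Real.exp (-t * ‖ξ‖ ^ α)) ∂μ ≤ 1 + D * ENNReal.ofReal (t ^ (-(1 + ε))))
    (T : ℝ) (y : ℚ_[p]) :
    ∫⁻ t in Ioc τ T, ENNReal.ofReal (transitionDensity μ χ α t y).re ≤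
      ENNReal.ofReal T + D * ENNReal.ofReal (τ ^ (-ε) / ε) :=
  calc ∫⁻ t in Ioc τ T, ENNReal.ofReal (transitionDensity μ χ α t y).re
      ≤ ∫⁻ t in Ioc τ T, (1 + D * ENNReal.ofReal (t ^ (-(1 + ε)))) :=
        setLIntegral_mono (by fun_prop) fun t ht ↦
          (ofReal_re_transitionDensity_le hχnorm t y).trans (hexp t (hτ.trans ht.1))
    _ = volume (Ioc τ T) + D * ∫⁻ t in Ioc τ T, ENNReal.ofReal (t ^ (-(1 + ε))) := by
        rw [lintegral_add_left measurable_const, lintegral_const_mul _ (by fun_prop),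
          setLIntegral_const, one_mul]
    _ ≤ ENNReal.ofReal T + D * ∫⁻ t in Ioi τ, ENNReal.ofReal (t ^ (-(1 + ε))) := by
        gcongr
        · rw [Real.volume_Ioc]
          exact ENNReal.ofReal_le_ofReal (by linarith)
        · exact Ioc_subset_Ioi_self
    _ = ENNReal.ofReal T + D * ENNReal.ofReal (τ ^ (-ε) / ε) := by
        rw [lintegral_Ioi_ofReal_rpow_neg hτ hε]

variable [BorelSpace ℚ_[p]] [μ.IsAddHaarMeasure]

lemma measure_closedBall_zpow_le (hμ : μ (closedBall 0 1) = 1) (r : ℤ) :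
    μ (closedBall 0 ((p : ℝ) ^ r)) ≤ ENNReal.ofReal ((p : ℝ) ^ r) := by
  obtain ⟨n, rfl | rfl⟩ := Int.eq_nat_or_neg r
  · calc μ (closedBall 0 ((p : ℝ) ^ (n : ℤ)))
        ≤ ∑ j ∈ Finset.range (p ^ n), μ (closedBall ((j : ℚ_[p]) / (p : ℚ_[p]) ^ n) 1) :=
          (measure_mono (closedBall_zpow_natCast_subset_iUnion n)).trans
            (measure_biUnion_finset_le _ _)
      _ = ENNReal.ofReal ((p : ℝ) ^ (n : ℤ)) := by
          simp [Measure.addHaar_closedBall_center, hμ]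
  · have hpacking : μ (closedBall 0 ((p : ℝ) ^ (-(n : ℤ)))) * ((p ^ n : ℕ) : ℝ≥0∞) ≤ 1 := by
      calc μ (closedBall 0 ((p : ℝ) ^ (-(n : ℤ)))) * ((p ^ n : ℕ) : ℝ≥0∞)
          = μ (⋃ j ∈ Finset.range (p ^ n), closedBall (j : ℚ_[p]) ((p : ℝ) ^ (-(n : ℤ)))) := by
            rw [measure_biUnion_finset (pairwiseDisjoint_closedBall_natCast n)
              fun _ _ ↦ measurableSet_closedBall]
            simp [Measure.addHaar_closedBall_center, mul_comm]
        _ ≤ 1 := hμ ▸ measure_mono (iUnion_closedBall_natCast_subset n)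
    refine (ENNReal.le_inv_iff_mul_le.2 hpacking).trans_eq ?_
    rw [zpow_neg, ENNReal.ofReal_inv_of_pos (zpow_natCast_prime_pos (n : ℤ))]
    norm_cast

lemma setLIntegral_sphere_zpow_le (hμ : μ (closedBall 0 1) = 1) (F : ℝ → ℝ≥0∞) (r : ℤ) :
    ∫⁻ ξ in sphere 0 ((p : ℝ) ^ r), F ‖ξ‖ ∂μ ≤ F ((p : ℝ) ^ r) * ENNReal.ofReal ((p : ℝ) ^ r) :=
  calc ∫⁻ ξ in sphere 0 ((p : ℝ) ^ r), F ‖ξ‖ ∂μ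
      = ∫⁻ _ in sphere 0 ((p : ℝ) ^ r), F ((p : ℝ) ^ r) ∂μ :=
        setLIntegral_congr_fun isClosed_sphere.measurableSet fun ξ hξ ↦ by
          rw [mem_sphere_zero_iff_norm.1 hξ]
    _ = F ((p : ℝ) ^ r) * μ (sphere 0 ((p : ℝ) ^ r)) := setLIntegral_const _ _
    _ ≤ F ((p : ℝ) ^ r) * ENNReal.ofReal ((p : ℝ) ^ r) := by
        gcongr
        exact (measure_mono sphere_subset_closedBall).trans (measure_closedBall_zpow_le hμ r)

lemma lintegral_closedBall_enorm_rpow_neg_lt_top (hμ : μ (closedBall 0 1) = 1)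
    {β : ℝ} (hβ : β < 1) : ∫⁻ y in closedBall (0 : ℚ_[p]) 1, ‖y‖ₑ ^ (-β) ∂μ < ⊤ := by
  have hball : closedBall (0 : ℚ_[p]) 1 =ᵐ[μ]
      (⋃ k : ℕ, sphere 0 ((p : ℝ) ^ ((0 : ℤ) - k)) : Set ℚ_[p]) := by
    rw [← closedBall_diff_zero_eq_iUnion_sphere, zpow_zero]
    exact (sdiff_null_ae_eq_self (measure_singleton 0)).symm
  have hinj : Function.Injective fun k : ℕ ↦ (0 : ℤ) - k := fun _ _ h ↦ by simpa using h
  set w := ENNReal.ofReal ((p : ℝ) ^ (β - 1))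
  have hw : w < 1 := ENNReal.ofReal_lt_one.2
    (Real.rpow_lt_one_of_one_lt_of_neg one_lt_natCast_prime (by linarith))
  have hsphere (k : ℕ) : ∫⁻ y in sphere 0 ((p : ℝ) ^ ((0 : ℤ) - k)), ‖y‖ₑ ^ (-β) ∂μ ≤ w ^ k := by
    have ha : (p : ℝ) ^ ((0 : ℤ) - k) = (p : ℝ) ^ (-(k : ℝ)) := by simp
    simp only [← ofReal_norm]
    refine (setLIntegral_sphere_zpow_le hμ (fun u ↦ ENNReal.ofReal u ^ (-β)) _).trans_eq ?_
    rw [ha, ENNReal.ofReal_rpow_of_pos (Real.rpow_pos_of_pos natCast_prime_pos _),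
      ← ENNReal.ofReal_mul (by positivity), ← ENNReal.ofReal_pow (by positivity)]
    congr 1
    rw [← Real.rpow_mul natCast_prime_pos.le, ← Real.rpow_add natCast_prime_pos,
      ← Real.rpow_natCast, ← Real.rpow_mul natCast_prime_pos.le]
    ring_nf
  rw [Measure.restrict_congr_set hball, lintegral_iUnion (fun _ ↦ isClosed_sphere.measurableSet)
    (pairwise_disjoint_sphere_zpow.comp_of_injective hinj)]
  calc ∑' k : ℕ, ∫⁻ y in sphere 0 ((p : ℝ) ^ ((0 : ℤ) - k)), ‖y‖ₑ ^ (-β) ∂μ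
      ≤ ∑' k : ℕ, w ^ k := ENNReal.tsum_le_tsum hsphere
    _ = (1 - w)⁻¹ := ENNReal.tsum_geometric w
    _ < ⊤ := ENNReal.inv_lt_top.2 (tsub_pos_of_lt hw)

lemma exists_pos_setLIntegral_mul_enorm_rpow_neg_lt_top (hμ : μ (closedBall 0 1) = 1)
    {f : ℚ_[p] → ℝ≥0∞} (hf : AEMeasurable f (μ.restrict (closedBall 0 1))) {r : ℝ} (hr : 1 < r)
    (hfr : ∫⁻ y in closedBall 0 1, f y ^ r ∂μ < ⊤) :
    ∃ δ : ℝ, 0 < δ ∧ ∫⁻ y in closedBall 0 1, f y * ‖y‖ₑ ^ (-δ) ∂μ < ⊤ := by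
  have hpq := Real.HolderConjugate.conjExponent hr
  have hq := hpq.symm.pos
  refine ⟨1 / (2 * r.conjExponent), by positivity,
    lintegral_mul_lt_top_of_holderConjugate hpq hf (by fun_prop) hfr ?_⟩
  have hexp : -(1 / (2 * r.conjExponent)) * r.conjExponent = -(1 / 2) := by field_simp
  simpa only [← ENNReal.rpow_mul, hexp] using
    lintegral_closedBall_enorm_rpow_neg_lt_top hμ (β := 1 / 2) (by norm_num)

lemma lintegral_sphere_exp_neg_mul_norm_rpow_le (hμ : μ (closedBall 0 1) = 1) {s t : ℝ}
    (hs : 0 < s) (ht : 0 < t) (k : ℕ) :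
    ∫⁻ ξ in sphere 0 ((p : ℝ) ^ ((k : ℤ) + 1)), ENNReal.ofReal (Real.exp (-t * ‖ξ‖ ^ α)) ∂μ ≤
      ENNReal.ofReal (s ^ s) * ENNReal.ofReal (t ^ (-s)) *
        ENNReal.ofReal ((p : ℝ) ^ (1 - α * s)) ^ (k + 1) := by
  set a : ℝ := (p : ℝ) ^ ((k : ℤ) + 1)
  have ha : a = (p : ℝ) ^ ((k + 1 : ℕ) : ℝ) := by simp [a, ← Real.rpow_intCast]
  have ha0 : 0 < a := zpow_natCast_prime_pos _
  refine (setLIntegral_sphere_zpow_le hμ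
    (fun u ↦ ENNReal.ofReal (Real.exp (-t * u ^ α))) _).trans ?_
  calc ENNReal.ofReal (Real.exp (-t * a ^ α)) * ENNReal.ofReal a
      ≤ ENNReal.ofReal (s ^ s * (t * a ^ α) ^ (-s)) * ENNReal.ofReal a := by
        gcongr
        rw [neg_mul]
        exact exp_neg_le_rpow_neg hs (by positivity)
    _ = ENNReal.ofReal (s ^ s) * ENNReal.ofReal (t ^ (-s)) *
          ENNReal.ofReal ((p : ℝ) ^ (1 - α * s)) ^ (k + 1) := by
        rw [← ENNReal.ofReal_mul (by positivity), ← ENNReal.ofReal_pow (by positivity),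
          ← ENNReal.ofReal_mul (by positivity), ← ENNReal.ofReal_mul (by positivity)]
        congr 1
        rw [Real.mul_rpow ht.le (by positivity), ha, ← Real.rpow_natCast,
          ← Real.rpow_mul natCast_prime_pos.le, ← Real.rpow_mul natCast_prime_pos.le,
          ← Real.rpow_mul natCast_prime_pos.le, mul_assoc, mul_assoc,
          ← Real.rpow_add natCast_prime_pos]
        ring_nf

lemma lintegral_exp_neg_mul_norm_rpow_le (hμ : μ (closedBall 0 1) = 1) {s : ℝ}
    (hs : 0 < s) (hαs : 1 < α * s) :
    ∃ D : ℝ≥0∞, D ≠ ⊤ ∧ ∀ t : ℝ, 0 < t →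
      ∫⁻ ξ, ENNReal.ofReal (Real.exp (-t * ‖ξ‖ ^ α)) ∂μ ≤ 1 + D * ENNReal.ofReal (t ^ (-s)) := by
  set w := ENNReal.ofReal ((p : ℝ) ^ (1 - α * s))
  have hw : w < 1 := ENNReal.ofReal_lt_one.2
    (Real.rpow_lt_one_of_one_lt_of_neg one_lt_natCast_prime (by linarith))
  refine ⟨ENNReal.ofReal (s ^ s) * (1 - w)⁻¹,
    ENNReal.mul_ne_top ENNReal.ofReal_ne_top (ENNReal.inv_ne_top.2 (tsub_pos_of_lt hw).ne'),
    fun t ht ↦ ?_⟩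
  have hball : ∫⁻ ξ in closedBall 0 1, ENNReal.ofReal (Real.exp (-t * ‖ξ‖ ^ α)) ∂μ ≤ 1 := by
    calc ∫⁻ ξ in closedBall 0 1, ENNReal.ofReal (Real.exp (-t * ‖ξ‖ ^ α)) ∂μ
        ≤ ∫⁻ _ in closedBall 0 1, 1 ∂μ := by
          refine lintegral_mono fun ξ ↦ ENNReal.ofReal_le_one.2 (Real.exp_le_one_iff.2 ?_)
          have := Real.rpow_nonneg (norm_nonneg ξ) α
          nlinarith
      _ = 1 := by rw [setLIntegral_const, one_mul, hμ]
  have hinj : Function.Injective fun k : ℕ ↦ (k : ℤ) + 1 := fun _ _ h ↦ by simpa using h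
  have hshells : (closedBall (0 : ℚ_[p]) 1)ᶜ = ⋃ k : ℕ, sphere 0 ((p : ℝ) ^ ((k : ℤ) + 1)) := by
    simpa only [zpow_zero, zero_add] using compl_closedBall_eq_iUnion_sphere (p := p) 0
  have hgeom : ∑' k : ℕ, w ^ (k + 1) ≤ (1 - w)⁻¹ :=
    (ENNReal.tsum_le_tsum fun k ↦ pow_le_pow_of_le_one bot_le hw.le k.le_succ).trans_eq
      (ENNReal.tsum_geometric w)
  calc ∫⁻ ξ, ENNReal.ofReal (Real.exp (-t * ‖ξ‖ ^ α)) ∂μ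
      = ∫⁻ ξ in closedBall 0 1, ENNReal.ofReal (Real.exp (-t * ‖ξ‖ ^ α)) ∂μ +
          ∫⁻ ξ in (closedBall 0 1)ᶜ, ENNReal.ofReal (Real.exp (-t * ‖ξ‖ ^ α)) ∂μ :=
        (lintegral_add_compl _ measurableSet_closedBall).symm
    _ ≤ 1 + ∑' k : ℕ, ENNReal.ofReal (s ^ s) * ENNReal.ofReal (t ^ (-s)) * w ^ (k + 1) := by
        rw [hshells, lintegral_iUnion (fun _ ↦ isClosed_sphere.measurableSet)
          (pairwise_disjoint_sphere_zpow.comp_of_injective hinj)]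
        exact add_le_add hball
          (ENNReal.tsum_le_tsum (lintegral_sphere_exp_neg_mul_norm_rpow_le hμ hs ht))
    _ ≤ 1 + ENNReal.ofReal (s ^ s) * (1 - w)⁻¹ * ENNReal.ofReal (t ^ (-s)) := by
        rw [ENNReal.tsum_mul_left, mul_right_comm _ (1 - w)⁻¹]
        gcongr

lemma setIntegral_char_eq_zero (hχadd : ∀ a b, χ (a + b) = χ a * χ b)
    (hχnontriv : ∀ a : ℚ_[p], 1 < ‖a‖ → χ a ≠ 1) {y : ℚ_[p]} {b : ℤ}
    (hy : 1 < ‖y‖ * (p : ℝ) ^ b) {s : Set ℚ_[p]} (hs : MeasurableSet s)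
    (hinv : ∀ z : ℚ_[p], ‖z‖ ≤ (p : ℝ) ^ b → ∀ ξ, z + ξ ∈ s ↔ ξ ∈ s) :
    ∫ ξ in s, χ (-(y * ξ)) ∂μ = 0 := by
  have hz : ‖(p : ℚ_[p]) ^ (-b)‖ = (p : ℝ) ^ b := by simp
  refine setIntegral_eq_zero_of_add_mem_iff (fun a c ↦ by rw [mul_add, neg_add, hχadd]) hs
    (hinv _ hz.le) (hχnontriv _ ?_)
  rwa [norm_neg, norm_mul, hz]

lemma integrable_char_mul_exp (hμ : μ (closedBall 0 1) = 1) (hχmeas : Measurable χ)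
    (hχnorm : ∀ a, ‖χ a‖ = 1) (hα : 0 < α) {t : ℝ} (ht : 0 < t) (y : ℚ_[p]) :
    Integrable (fun ξ ↦ χ (-(y * ξ)) * (Real.exp (-t * ‖ξ‖ ^ α) : ℂ)) μ := by
  obtain ⟨D, hD, hbound⟩ := lintegral_exp_neg_mul_norm_rpow_le hμ (α := α) (s := 2 / α)
    (by positivity) (by rw [mul_div_cancel₀ _ hα.ne']; norm_num)
  refine ⟨((hχmeas.comp (by fun_prop)).mul (by fun_prop)).aestronglyMeasurable, ?_⟩
  simp only [HasFiniteIntegral, enorm_mul_exp_of_norm_eq_one, hχnorm]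
  exact (hbound t ht).trans_lt
    (ENNReal.add_lt_top.2 ⟨ENNReal.one_lt_top, ENNReal.mul_lt_top hD.lt_top ENNReal.ofReal_lt_top⟩)

lemma setIntegral_compl_closedBall_char_mul_radial_eq_zero
    (hχadd : ∀ a b, χ (a + b) = χ a * χ b) (hχnontriv : ∀ a : ℚ_[p], 1 < ‖a‖ → χ a ≠ 1)
    {φ : ℝ → ℂ} {y : ℚ_[p]} {r : ℤ} (hy : ‖y‖ = (p : ℝ) ^ (-r))
    (hf : Integrable (fun ξ ↦ χ (-(y * ξ)) * φ ‖ξ‖) μ) :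
    ∫ ξ in (closedBall 0 ((p : ℝ) ^ (r + 1)))ᶜ, χ (-(y * ξ)) * φ ‖ξ‖ ∂μ = 0 := by
  have hinj : Function.Injective fun k : ℕ ↦ r + 1 + k + 1 := fun _ _ h ↦ by simpa using h
  have hsphere (k : ℕ) :
      ∫ ξ in sphere 0 ((p : ℝ) ^ (r + 1 + k + 1)), χ (-(y * ξ)) * φ ‖ξ‖ ∂μ = 0 := by
    rw [setIntegral_congr_fun isClosed_sphere.measurableSet
        (g := fun ξ ↦ χ (-(y * ξ)) * φ ((p : ℝ) ^ (r + 1 + k + 1)))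
        fun ξ hξ ↦ by rw [mem_sphere_zero_iff_norm.1 hξ],
      integral_mul_const, setIntegral_char_eq_zero hχadd hχnontriv
        (one_lt_norm_mul_zpow hy (by omega)) isClosed_sphere.measurableSet
        fun z hz ξ ↦ add_mem_sphere_zpow_iff hz ξ, zero_mul]
  rw [compl_closedBall_eq_iUnion_sphere, integral_iUnion (fun _ ↦ isClosed_sphere.measurableSet)
    (pairwise_disjoint_sphere_zpow.comp_of_injective hinj)
    (by rw [← compl_closedBall_eq_iUnion_sphere]; exact hf.integrableOn)]
  simp only [hsphere, tsum_zero]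

lemma re_transitionDensity_le (hμ : μ (closedBall 0 1) = 1) (hχmeas : Measurable χ)
    (hχnorm : ∀ a, ‖χ a‖ = 1) (hχadd : ∀ a b, χ (a + b) = χ a * χ b)
    (hχnontriv : ∀ a : ℚ_[p], 1 < ‖a‖ → χ a ≠ 1) (hα : 0 < α) {t : ℝ} (ht : 0 < t)
    {y : ℚ_[p]} {r : ℤ} (hy : ‖y‖ = (p : ℝ) ^ (-r)) :
    (transitionDensity μ χ α t y).re ≤ t * ((p : ℝ) ^ (r + 1)) ^ (1 + α) := by
  set R : ℝ := (p : ℝ) ^ (r + 1)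
  have hR : 0 < R := zpow_natCast_prime_pos _
  have hf := integrable_char_mul_exp hμ hχmeas hχnorm hα ht y
  have htail := setIntegral_compl_closedBall_char_mul_radial_eq_zero hχadd hχnontriv
    (φ := fun u ↦ (Real.exp (-t * u ^ α) : ℂ)) hy hf
  have hball : ∫ ξ in closedBall 0 R, χ (-(y * ξ)) ∂μ = 0 :=
    setIntegral_char_eq_zero hχadd hχnontriv (one_lt_norm_mul_zpow hy (lt_add_one r))
      measurableSet_closedBall fun z hz ξ ↦ add_mem_closedBall_zpow_iff hz ξ
  have hχint : IntegrableOn (fun ξ ↦ χ (-(y * ξ))) (closedBall 0 R) μ :=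
    (integrableOn_const measure_closedBall_lt_top.ne).mono'
      (hχmeas.comp (by fun_prop)).aestronglyMeasurable (ae_of_all _ fun ξ ↦ (hχnorm _).le)
  set c : ℝ := Real.exp (-t * R ^ α)
  -- subtracting the constant `c` costs nothing, since `∫ χ (-(y ξ))` over `closedBall 0 R` is zero
  have hrecentre : transitionDensity μ χ α t y =
      ∫ ξ in closedBall 0 R, χ (-(y * ξ)) * ((Real.exp (-t * ‖ξ‖ ^ α) - c : ℝ) : ℂ) ∂μ := by
    simp only [Complex.ofReal_sub, mul_sub]
    rw [integral_sub hf.integrableOn (hχint.mul_const _), integral_mul_const, hball, zero_mul,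
      sub_zero, ← add_zero (∫ ξ in closedBall 0 R, _ ∂μ), ← htail,
      integral_add_compl measurableSet_closedBall hf]
    rfl
  have hpointwise : ∀ ξ ∈ closedBall (0 : ℚ_[p]) R,
      ‖χ (-(y * ξ)) * ((Real.exp (-t * ‖ξ‖ ^ α) - c : ℝ) : ℂ)‖ ≤ t * R ^ α := fun ξ hξ ↦ by
    rw [norm_mul, hχnorm, one_mul, Complex.norm_real, Real.norm_eq_abs]
    exact abs_exp_neg_mul_rpow_sub_le ht.le hα.le (norm_nonneg ξ) (mem_closedBall_zero_iff.1 hξ)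
  calc (transitionDensity μ χ α t y).re ≤ ‖transitionDensity μ χ α t y‖ := Complex.re_le_norm _
    _ ≤ t * R ^ α * μ.real (closedBall 0 R) :=
        hrecentre ▸ norm_setIntegral_le_of_norm_le_const measure_closedBall_lt_top hpointwise
    _ ≤ t * R ^ α * R := by
        gcongr
        exact ENNReal.toReal_le_of_le_ofReal hR.le (measure_closedBall_zpow_le hμ _)
    _ = t * R ^ (1 + α) := by rw [Real.rpow_add hR, Real.rpow_one]; ring

lemma lintegral_Ioc_norm_rpow_ofReal_re_transitionDensity_le (hμ : μ (closedBall 0 1) = 1)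
    (hχmeas : Measurable χ) (hχnorm : ∀ a, ‖χ a‖ = 1) (hχadd : ∀ a b, χ (a + b) = χ a * χ b)
    (hχnontriv : ∀ a : ℚ_[p], 1 < ‖a‖ → χ a ≠ 1) (hα : 1 ≤ α) {y : ℚ_[p]} (hy0 : y ≠ 0)
    (hy1 : ‖y‖ ≤ 1) :
    ∫⁻ t in Ioc 0 (‖y‖ ^ α), ENNReal.ofReal (transitionDensity μ χ α t y).re ≤
      ENNReal.ofReal ((p : ℝ) ^ (1 + α)) := by
  set r := y.valuation
  have hr : 0 ≤ r := (Padic.norm_le_one_iff_val_nonneg y).1 hy1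
  have hy : ‖y‖ = (p : ℝ) ^ (-r) := Padic.norm_eq_zpow_neg_valuation hy0
  set τ := ‖y‖ ^ α with hτdef
  have hτ : τ = (p : ℝ) ^ (-(r : ℝ) * α) := by
    rw [hτdef, hy, ← Real.rpow_intCast, ← Real.rpow_mul natCast_prime_pos.le]
    push_cast
    ring_nf
  have hR : (p : ℝ) ^ (r + 1) = (p : ℝ) ^ ((r : ℝ) + 1) := by
    rw [← Real.rpow_intCast]
    push_cast
    ring_nf
  calc ∫⁻ t in Ioc 0 τ, ENNReal.ofReal (transitionDensity μ χ α t y).re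
      ≤ ∫⁻ _ in Ioc 0 τ, ENNReal.ofReal (τ * ((p : ℝ) ^ (r + 1)) ^ (1 + α)) :=
        setLIntegral_mono measurable_const fun t ht ↦ ENNReal.ofReal_le_ofReal <|
          (re_transitionDensity_le hμ hχmeas hχnorm hχadd hχnontriv (by linarith) ht.1 hy).trans
            (by gcongr; exact ht.2)
    _ = ENNReal.ofReal (τ * ((p : ℝ) ^ (r + 1)) ^ (1 + α) * τ) := by
        rw [setLIntegral_const, Real.volume_Ioc, sub_zero, ← ENNReal.ofReal_mul (by positivity)]
    _ ≤ ENNReal.ofReal ((p : ℝ) ^ (1 + α)) := by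
        refine ENNReal.ofReal_le_ofReal ?_
        rw [hτ, hR, ← Real.rpow_mul natCast_prime_pos.le, ← Real.rpow_add natCast_prime_pos,
          ← Real.rpow_add natCast_prime_pos]
        refine Real.rpow_le_rpow_of_exponent_le one_lt_natCast_prime.le ?_
        have hr' : (0 : ℝ) ≤ r := by exact_mod_cast hr
        nlinarith

lemma measurable_transitionDensity (hχmeas : Measurable χ) :
    Measurable fun w : ℝ × ℚ_[p] ↦ transitionDensity μ χ α w.1 w.2 := by
  have hF : Measurable fun z : (ℝ × ℚ_[p]) × ℚ_[p] ↦
      χ (-(z.1.2 * z.2)) * (Real.exp (-z.1.1 * ‖z.2‖ ^ α) : ℂ) :=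
    (hχmeas.comp (by fun_prop)).mul (by fun_prop)
  exact hF.stronglyMeasurable.integral_prod_right'.measurable

lemma exists_lintegral_Ioc_ofReal_re_transitionDensity_le (hμ : μ (closedBall 0 1) = 1)
    (hχmeas : Measurable χ) (hχnorm : ∀ a, ‖χ a‖ = 1) (hχadd : ∀ a b, χ (a + b) = χ a * χ b)
    (hχnontriv : ∀ a : ℚ_[p], 1 < ‖a‖ → χ a ≠ 1) (hα : 1 ≤ α) {δ : ℝ} (hδ : 0 < δ) (T : ℝ) :
    ∃ K : ℝ≥0∞, K ≠ ⊤ ∧ ∀ y : ℚ_[p], y ≠ 0 → ‖y‖ ≤ 1 →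
      ∫⁻ t in Ioc 0 T, ENNReal.ofReal (transitionDensity μ χ α t y).re ≤ K * ‖y‖ₑ ^ (-δ) := by
  set ε := δ / α
  have hε : 0 < ε := div_pos hδ (by linarith)
  obtain ⟨D, hD, hexp⟩ := lintegral_exp_neg_mul_norm_rpow_le hμ (α := α) (s := 1 + ε)
    (by positivity) (by nlinarith)
  refine ⟨ENNReal.ofReal ((p : ℝ) ^ (1 + α)) + ENNReal.ofReal T + D * ENNReal.ofReal (1 / ε),
    by finiteness, fun y hy0 hy1 ↦ ?_⟩
  set τ := ‖y‖ ^ α with hτdef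
  have hτ0 : 0 < τ := Real.rpow_pos_of_pos (norm_pos_iff.2 hy0) α
  have hX : ‖y‖ₑ ^ (-δ) = ENNReal.ofReal (τ ^ (-ε)) := by
    rw [← ofReal_norm, ENNReal.ofReal_rpow_of_pos (norm_pos_iff.2 hy0), hτdef,
      ← Real.rpow_mul (norm_nonneg y), mul_neg, mul_div_cancel₀ _ (by linarith)]
  have hX1 : 1 ≤ ENNReal.ofReal (τ ^ (-ε)) := ENNReal.one_le_ofReal.2
    (Real.one_le_rpow_of_pos_of_le_one_of_nonpos hτ0 (Real.rpow_le_one (norm_nonneg y) hy1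
      (by linarith)) (by linarith))
  calc ∫⁻ t in Ioc 0 T, ENNReal.ofReal (transitionDensity μ χ α t y).re
      ≤ ∫⁻ t in Ioc 0 τ ∪ Ioc τ T, ENNReal.ofReal (transitionDensity μ χ α t y).re :=
        lintegral_mono_set Ioc_subset_Ioc_union_Ioc
    _ ≤ ENNReal.ofReal ((p : ℝ) ^ (1 + α)) +
          (ENNReal.ofReal T + D * ENNReal.ofReal (τ ^ (-ε) / ε)) :=
        (lintegral_union_le _ _ _).trans (add_le_add
          (lintegral_Ioc_norm_rpow_ofReal_re_transitionDensity_le hμ hχmeas hχnorm hχadd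
            hχnontriv hα hy0 hy1)
          (lintegral_Ioc_ofReal_re_transitionDensity_le_of_lintegral_exp_le hχnorm hτ0 hε hexp T y))
    _ ≤ (ENNReal.ofReal ((p : ℝ) ^ (1 + α)) + ENNReal.ofReal T + D * ENNReal.ofReal (1 / ε)) *
          ENNReal.ofReal (τ ^ (-ε)) := by
        rw [add_mul, add_mul, ← add_assoc, mul_assoc D, ← ENNReal.ofReal_mul (one_div_pos.2 hε).le,
          one_div_mul_eq_div]
        gcongr <;> exact le_mul_of_one_le_right' hX1
    _ = _ := by rw [hX]

end

end PadicStable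

open PadicStable in
theorem stmt14_general (p : ℕ) [Fact p.Prime] [MeasurableSpace ℚ_[p]] [BorelSpace ℚ_[p]]
    (μ : Measure ℚ_[p]) [μ.IsAddHaarMeasure]
    (hμ : μ {x : ℚ_[p] | ‖x‖ ≤ 1} = 1)
    (χ : ℚ_[p] → ℂ) (hχmeas : Measurable χ)
    (hχnorm : ∀ a, ‖χ a‖ = 1)
    (hχadd : ∀ a b, χ (a + b) = χ a * χ b)
    (hχnontriv : ∀ a : ℚ_[p], 1 < ‖a‖ → χ a ≠ 1)
    (α lam : ℝ) (hα : 1 ≤ α) (hlam : α * (1 + α) < lam)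
    (b : ℚ_[p] → ℚ_[p]) (hb : Measurable b) (x : ℚ_[p])
    (hint : ∫⁻ y in {y : ℚ_[p] | ‖y‖ ≤ 1},
      (‖b (x + y)‖₊ : ℝ≥0∞) ^ (-lam) ∂μ < ⊤)
    (T : ℝ) :
    ∫⁻ t in Set.Ioc (0 : ℝ) T,
        ∫⁻ y in {y : ℚ_[p] | ‖y‖ ≤ 1},
          (‖b (x + y)‖₊ : ℝ≥0∞) ^ (-α) *
            ENNReal.ofReal
              ((∫ ξ : ℚ_[p], χ (-(y * ξ)) * (Real.exp (-t * ‖ξ‖ ^ α) : ℂ) ∂μ).re)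
          ∂μ < ⊤ := by
  show ∫⁻ t in Ioc 0 T, ∫⁻ y in {y : ℚ_[p] | ‖y‖ ≤ 1},
    ‖b (x + y)‖ₑ ^ (-α) * ENNReal.ofReal (transitionDensity μ χ α t y).re ∂μ < ⊤
  have hball : {y : ℚ_[p] | ‖y‖ ≤ 1} = closedBall 0 1 := by ext; simp
  rw [hball] at hμ hint ⊢
  have hg : Measurable fun y ↦ ‖b (x + y)‖ₑ ^ (-α) := by fun_prop
  have hgr : ∫⁻ y in closedBall 0 1, (‖b (x + y)‖ₑ ^ (-α)) ^ (lam / α) ∂μ < ⊤ := by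
    have hexp : -α * (lam / α) = -lam := by field_simp
    simpa only [← ENNReal.rpow_mul, hexp, enorm_eq_nnnorm] using hint
  obtain ⟨δ, hδ, hHolder⟩ := exists_pos_setLIntegral_mul_enorm_rpow_neg_lt_top hμ
    hg.aemeasurable ((one_lt_div (by linarith)).2 (by nlinarith)) hgr
  obtain ⟨K, hK, hKbound⟩ := exists_lintegral_Ioc_ofReal_re_transitionDensity_le hμ hχmeas hχnorm
    hχadd hχnontriv hα hδ T
  have hP : Measurable fun w : ℝ × ℚ_[p] ↦ ENNReal.ofReal (transitionDensity μ χ α w.1 w.2).re :=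
    (Complex.measurable_re.comp (measurable_transitionDensity hχmeas)).ennreal_ofReal
  calc ∫⁻ t in Ioc 0 T, ∫⁻ y in closedBall 0 1,
        ‖b (x + y)‖ₑ ^ (-α) * ENNReal.ofReal (transitionDensity μ χ α t y).re ∂μ
      = ∫⁻ y in closedBall 0 1, ‖b (x + y)‖ₑ ^ (-α) *
          (∫⁻ t in Ioc 0 T, ENNReal.ofReal (transitionDensity μ χ α t y).re) ∂μ :=
        lintegral_lintegral_mul_swap
          (g := fun t y ↦ ENNReal.ofReal (transitionDensity μ χ α t y).re) hg hP
    _ ≤ ∫⁻ y in closedBall 0 1, K * (‖b (x + y)‖ₑ ^ (-α) * ‖y‖ₑ ^ (-δ)) ∂μ := by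
        refine lintegral_mono_ae ?_
        filter_upwards [ae_restrict_mem measurableSet_closedBall,
          ae_restrict_of_ae (Measure.ae_ne μ 0)] with y hy1 hy0
        rw [mul_left_comm]
        gcongr
        exact hKbound y hy0 (mem_closedBall_zero_iff.1 hy1)
    _ = K * ∫⁻ y in closedBall 0 1, ‖b (x + y)‖ₑ ^ (-α) * ‖y‖ₑ ^ (-δ) ∂μ :=
        lintegral_const_mul _ (by fun_prop)
    _ < ⊤ := ENNReal.mul_lt_top hK.lt_top hHolder

/-- if `λ > α(1+α)` and `∫_{Z_p} |b(x+y)|_p^{-λ} dμ(y) < ∞`, then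
`∫_0^T ∫_{Z_p} |b(x+y)|_p^{-α} P(t,y) dμ(y) dt < ∞`, where `P(t,y)` is the p-adic
α-stable transition density. (Here `‖·‖₊ ^ (-λ)` is the `ℝ≥0∞`-valued power, which
is `∞` at `b(x+y) = 0`.) -/
theorem stmt14 (p : ℕ) [Fact p.Prime] [MeasurableSpace ℚ_[p]] [BorelSpace ℚ_[p]]
    (μ : Measure ℚ_[p]) [μ.IsAddHaarMeasure]
    (hμ : μ {x : ℚ_[p] | ‖x‖ ≤ 1} = 1)
    (χ : ℚ_[p] → ℂ) (hχmeas : Measurable χ)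
    (hχnorm : ∀ a, ‖χ a‖ = 1)
    (hχadd : ∀ a b, χ (a + b) = χ a * χ b)
    (hχtriv : ∀ a : ℚ_[p], ‖a‖ ≤ 1 → χ a = 1)
    (hχnontriv : ∀ a : ℚ_[p], 1 < ‖a‖ → χ a ≠ 1)
    (α lam : ℝ) (hα : 1 ≤ α) (hlam : α * (1 + α) < lam)
    (b : ℚ_[p] → ℚ_[p]) (hb : Measurable b) (x : ℚ_[p])
    (hint : ∫⁻ y in {y : ℚ_[p] | ‖y‖ ≤ 1},
      (‖b (x + y)‖₊ : ℝ≥0∞) ^ (-lam) ∂μ < ⊤)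
    (T : ℝ) (hT : 0 < T) :
    ∫⁻ t in Set.Ioc (0 : ℝ) T,
        ∫⁻ y in {y : ℚ_[p] | ‖y‖ ≤ 1},
          (‖b (x + y)‖₊ : ℝ≥0∞) ^ (-α) *
            ENNReal.ofReal
              ((∫ ξ : ℚ_[p], χ (-(y * ξ)) * (Real.exp (-t * ‖ξ‖ ^ α) : ℂ) ∂μ).re)
          ∂μ < ⊤ :=
  stmt14_general p μ hμ χ hχmeas hχnorm hχadd hχnontriv α lam hα hlam b hb x hint T
end
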